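/- arXiv:2203.01757 — 6 statements merged into one kernel-verified Lean document; each statement's English description precedes it below -/
import Mathlib

section
/- Let $\{a_k\}_{k\ge 0}$ be a non-negative real sequence, $\xi > 0$, and define $b_k = \sum_{j=0}^k a_j$. Then $\sum_{j=0}^k \frac{a_j}{\xi + b_j} \le \log\big(\frac{\xi + b_k}{\xi}\big)$. -/
/-!
Since `1 - t⁻¹ ≤ log t` for `t > 0`, each summand satisfies
`a_j / (ξ + b_j) ≤ log ((ξ + b_j) / (ξ + b_{j-1}))` (with `b_{-1} = 0`),
and these logarithms telescope to `log ((ξ + b_k) / ξ)`.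
-/

open Finset Real

lemma sub_div_le_log_div {x y : ℝ} (hx : 0 < x) (hy : 0 < y) :
    (y - x) / y ≤ log (y / x) := by
  have h := one_sub_inv_le_log_of_pos (div_pos hy hx)
  rwa [inv_div, ← div_self hy.ne', ← sub_div] at h

lemma sum_sub_div_le_log_div {c : ℕ → ℝ} (hc : ∀ j, 0 < c j) (n : ℕ) :
    ∑ j ∈ range n, (c (j + 1) - c j) / c (j + 1) ≤ log (c n / c 0) := by
  induction n with
  | zero => simp
  | succ n ih =>
    have hlog : log (c (n + 1) / c 0) = log (c n / c 0) + log (c (n + 1) / c n) := by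
      rw [← log_mul (div_pos (hc n) (hc 0)).ne' (div_pos (hc (n + 1)) (hc n)).ne',
        div_mul_div_comm, mul_comm (c n), mul_div_mul_right _ _ (hc n).ne']
    rw [sum_range_succ, hlog]
    exact add_le_add ih (sub_div_le_log_div (hc n) (hc (n + 1)))

theorem stmt_1 (a : ℕ → ℝ) (ha : ∀ k, 0 ≤ a k) (ξ : ℝ) (hξ : 0 < ξ)
    (b : ℕ → ℝ) (hb : ∀ k, b k = ∑ j ∈ Finset.range (k + 1), a j) (k : ℕ) :
    ∑ j ∈ Finset.range (k + 1), a j / (ξ + b j) ≤ Real.log ((ξ + b k) / ξ) := by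
  set c : ℕ → ℝ := fun j => ξ + ∑ i ∈ range j, a i with hc_def
  have hc : ∀ j, 0 < c j := fun j =>
    add_pos_of_pos_of_nonneg hξ (sum_nonneg fun i _ => ha i)
  have hcb : ∀ j, c (j + 1) = ξ + b j := fun j => by rw [hb]
  have hca : ∀ j, c (j + 1) - c j = a j := fun j => by
    simp only [hc_def, sum_range_succ]; ring
  have h := sum_sub_div_le_log_div hc (k + 1)
  have hc0 : c 0 = ξ := by simp [hc_def]
  simp only [hca] at h
  simpa only [hcb, hc0] using h
end

section
/- Let $\{a_k\}_{k\ge 0}$ be a non-negative real sequence, $0 < \alpha < 1$, $\xi > 0$, and $b_k = \sum_{j=0}^k a_j$. Then $\sum_{j=0}^k \frac{a_j}{(\xi + b_j)^\alpha} \le \frac{1}{1-\alpha}(\xi + b_k)^{1-\alpha}$. -/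
open Real

lemma key_step {α x y : ℝ} (hα0 : 0 < α) (hα1 : α < 1) (hx : 0 < x) (hxy : x ≤ y) :
    (y - x) / y ^ α ≤ (1 / (1 - α)) * (y ^ (1 - α) - x ^ (1 - α)) := by
  have hy : 0 < y := hx.trans_le hxy
  have h1α : 0 < 1 - α := by linarith
  set s : ℝ := x / y - 1 with hs
  have hs1 : -1 ≤ s := by
    have : 0 < x / y := div_pos hx hy
    simp [hs]; linarith
  have hb := rpow_one_add_le_one_add_mul_self hs1 h1α.le (by linarith : (1:ℝ) - α ≤ 1)
  have hxy' : (1 : ℝ) + s = x / y := by ring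
  rw [hxy'] at hb
  -- hb : (x/y)^(1-α) ≤ 1 + (1-α) * s
  have hdiv : (x / y) ^ (1 - α) = x ^ (1 - α) / y ^ (1 - α) :=
    Real.div_rpow hx.le hy.le _
  rw [hdiv] at hb
  have hypow : 0 < y ^ (1 - α) := Real.rpow_pos_of_pos hy _
  have hmul : x ^ (1 - α) ≤ (1 + (1 - α) * s) * y ^ (1 - α) := by
    rw [div_le_iff₀ hypow] at hb; exact hb
  have hysplit : y ^ (1 - α) = y / y ^ α := by
    rw [eq_div_iff (Real.rpow_pos_of_pos hy α).ne', ← Real.rpow_add hy]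
    norm_num
  have hkey : (1 - α) * ((y - x) / y ^ α) ≤ y ^ (1 - α) - x ^ (1 - α) := by
    have : (1 + (1 - α) * s) * y ^ (1 - α)
        = y ^ (1 - α) - (1 - α) * ((y - x) / y ^ α) := by
      rw [hs, hysplit]
      field_simp
      ring
    rw [this] at hmul
    linarith
  calc (y - x) / y ^ α = (1 / (1 - α)) * ((1 - α) * ((y - x) / y ^ α)) := by
        field_simp
    _ ≤ (1 / (1 - α)) * (y ^ (1 - α) - x ^ (1 - α)) :=
        mul_le_mul_of_nonneg_left hkey (by positivity)

theorem stmt_2 (a : ℕ → ℝ) (ha : ∀ k, 0 ≤ a k) (α ξ : ℝ) (hα0 : 0 < α) (hα1 : α < 1)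
    (hξ : 0 < ξ) (b : ℕ → ℝ) (hb : ∀ k, b k = ∑ j ∈ Finset.range (k + 1), a j) (k : ℕ) :
    ∑ j ∈ Finset.range (k + 1), a j / (ξ + b j) ^ α ≤
      (1 / (1 - α)) * (ξ + b k) ^ (1 - α) := by
  have h1α : 0 < 1 - α := by linarith
  have hbnn : ∀ j, 0 ≤ b j := fun j => by
    rw [hb]; exact Finset.sum_nonneg fun i _ => ha i
  have hbmono : ∀ j, b j ≤ b (j + 1) := fun j => by
    rw [hb, hb, Finset.sum_range_succ a (j+1)]
    linarith [ha (j + 1)]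
  -- stronger claim with -ξ^{1-α} slack
  have main : ∀ k, ∑ j ∈ Finset.range (k + 1), a j / (ξ + b j) ^ α ≤
      (1 / (1 - α)) * ((ξ + b k) ^ (1 - α) - ξ ^ (1 - α)) := by
    intro k
    induction k with
    | zero =>
      simp only [Nat.zero_add, Finset.sum_range_one]
      have hb0 : b 0 = a 0 := by rw [hb]; simp
      have hkey := key_step hα0 hα1 hξ (by linarith [ha 0] : ξ ≤ ξ + b 0)
      have heq : ξ + b 0 - ξ = a 0 := by rw [hb0]; ring
      rw [heq] at hkey
      exact hkey
    | succ n ih =>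
      rw [Finset.sum_range_succ]
      have hbn : b (n + 1) = b n + a (n + 1) := by
        rw [hb, hb, Finset.sum_range_succ]
      have hstep := key_step hα0 hα1 (by linarith [hbnn n] : (0:ℝ) < ξ + b n)
        (by linarith [hbmono n] : ξ + b n ≤ ξ + b (n + 1))
      have heq : ξ + b (n + 1) - (ξ + b n) = a (n + 1) := by rw [hbn]; ring
      rw [heq] at hstep
      calc _ ≤ (1 / (1 - α)) * ((ξ + b n) ^ (1 - α) - ξ ^ (1 - α))
              + (1 / (1 - α)) * ((ξ + b (n+1)) ^ (1 - α) - (ξ + b n) ^ (1 - α)) := by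
              exact add_le_add ih hstep
        _ = (1 / (1 - α)) * ((ξ + b (n+1)) ^ (1 - α) - ξ ^ (1 - α)) := by ring
  calc ∑ j ∈ Finset.range (k + 1), a j / (ξ + b j) ^ α
      ≤ (1 / (1 - α)) * ((ξ + b k) ^ (1 - α) - ξ ^ (1 - α)) := main k
    _ ≤ (1 / (1 - α)) * (ξ + b k) ^ (1 - α) := by
        have : 0 ≤ ξ ^ (1 - α) := (Real.rpow_pos_of_pos hξ _).le
        have h2 : 0 < 1 / (1 - α) := by positivity
        nlinarith
end

section
/- Let $\gamma_1, \gamma_2 > 0$ with $\gamma_2 > 3\gamma_1$ and let $u > 0$ satisfy $\gamma_1 u \le \gamma_2 \log(u)$. Then $u \le -\frac{\gamma_2}{\gamma_1} W_{-1}\big(-\frac{\gamma_1}{\gamma_2}\big)$, where $W_{-1}$ is the lower branch of the Lambert W function. -/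
/-- if `w` is the value of the lower Lambert branch `W₋₁(-γ₁/γ₂)`
(characterized by `w ≤ -1` and `w * exp w = -γ₁/γ₂`), then any `u > 0` with
`γ₁ u ≤ γ₂ log u` satisfies `u ≤ -(γ₂/γ₁) w`. -/
theorem stmt_5 (γ₁ γ₂ u w : ℝ) (h1 : 0 < γ₁) (h2 : 0 < γ₂) (h3 : 3 * γ₁ < γ₂)
    (hu : 0 < u) (hineq : γ₁ * u ≤ γ₂ * Real.log u)
    (hw1 : w ≤ -1) (hw2 : w * Real.exp w = -(γ₁ / γ₂)) :
    u ≤ -(γ₂ / γ₁) * w := by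
  by_contra h
  push_neg at h
  set x₀ : ℝ := -(γ₂ / γ₁) * w with hx₀def
  have hwneg : w < 0 := lt_of_le_of_lt hw1 (by norm_num)
  have hratio : 0 < γ₂ / γ₁ := div_pos h2 h1
  have hx₀pos : 0 < x₀ := by
    have : 0 < (γ₂ / γ₁) * (-w) := mul_pos hratio (by linarith)
    nlinarith
  -- log(-w) = log γ₁ - log γ₂ - w
  have h' : (-w) * Real.exp w = γ₁ / γ₂ := by rw [neg_mul, hw2, neg_neg]
  have hlogw : Real.log (-w) = Real.log γ₁ - Real.log γ₂ - w := by
    have := congrArg Real.log h'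
    rw [Real.log_mul (by linarith) (Real.exp_ne_zero w), Real.log_exp,
      Real.log_div h1.ne' h2.ne'] at this
    linarith
  have hlogx₀ : Real.log x₀ = -w := by
    have : x₀ = (γ₂ / γ₁) * (-w) := by ring
    rw [this, Real.log_mul (ne_of_gt hratio) (by linarith),
      Real.log_div h2.ne' h1.ne', hlogw]
    ring
  -- log u < log x₀ + u/x₀ - 1
  have hdiv1 : (1 : ℝ) < u / x₀ := (one_lt_div hx₀pos).2 h
  have hlt : Real.log (u / x₀) < u / x₀ - 1 :=
    Real.log_lt_sub_one_of_pos (by positivity) (ne_of_gt hdiv1)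
  have hlogu : Real.log u = Real.log x₀ + Real.log (u / x₀) := by
    rw [Real.log_div hu.ne' hx₀pos.ne']; ring
  -- u / x₀ ≤ (γ₁/γ₂) * u
  have hx₀ge : γ₂ / γ₁ ≤ x₀ := by nlinarith
  have hprod : u / x₀ * (-w) = (γ₁ / γ₂) * u := by
    rw [hx₀def]; field_simp [hwneg.ne]
  have hst : -w ≤ (γ₁ / γ₂) * u := by
    have : (γ₁ / γ₂) * x₀ = -w := by rw [hx₀def]; field_simp
    nlinarith [mul_pos (div_pos h1 h2) hu]
  -- contradiction
  have hfinal : Real.log u < (γ₁ / γ₂) * u := by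
    rw [hlogu, hlogx₀]
    have key : -w + (u / x₀ - 1) ≤ (γ₁ / γ₂) * u := by
      nlinarith [mul_nonneg (by linarith : (0:ℝ) ≤ -w - 1)
        (by linarith : (0:ℝ) ≤ (γ₁ / γ₂) * u - (-w)), hprod]
    linarith
  have : γ₂ * Real.log u < γ₁ * u := by
    have := (mul_lt_mul_iff_right₀ h2).2 hfinal
    calc γ₂ * Real.log u < γ₂ * ((γ₁ / γ₂) * u) := this
    _ = γ₁ * u := by field_simp
  linarith
end

section
/- For every $x > 0$, $|W_{-1}(-e^{-x-1})| \le 1 + \sqrt{2x} + x$. -/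
lemma fmono : StrictMonoOn (fun t : ℝ => t - Real.log t) (Set.Ici 1) := by
  apply strictMonoOn_of_deriv_pos (convex_Ici 1)
  · exact (continuous_id.continuousOn).sub
      (Real.continuousOn_log.mono (fun t ht => ne_of_gt (lt_of_lt_of_le one_pos ht)))
  · intro t ht
    rw [interior_Ici] at ht
    have ht1 : (1:ℝ) < t := ht
    have h : HasDerivAt (fun t : ℝ => t - Real.log t) (1 - 1/t) t :=
      (hasDerivAt_id t).sub ((Real.hasDerivAt_log (by linarith)).congr_deriv (by ring))
    rw [h.deriv]
    have : 1/t < 1 := by rw [div_lt_one (by linarith)]; exact ht1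
    linarith

/-- for every `x > 0`, `|W₋₁(-e^{-x-1})| ≤ 1 + √(2x) + x`, where the value
`w = W₋₁(-e^{-x-1})` of the lower Lambert branch is characterized by `w ≤ -1` and
`w * exp w = -e^{-x-1}`. -/
theorem stmt_6 (x w : ℝ) (hx : 0 < x) (hw1 : w ≤ -1)
    (hw2 : w * Real.exp w = -Real.exp (-x - 1)) :
    |w| ≤ 1 + Real.sqrt (2 * x) + x := by
  set u : ℝ := -w with hu_def
  have hu1 : 1 ≤ u := by simp only [hu_def]; linarith
  have hu0 : 0 < u := by linarith
  have hue : u * Real.exp (-u) = Real.exp (-x - 1) := by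
    have : w = -u := by simp [hu_def]
    rw [this] at hw2; linarith [hw2]
  have hfu : u - Real.log u = x + 1 := by
    have := congrArg Real.log hue
    rw [Real.log_mul (ne_of_gt hu0) (Real.exp_ne_zero _), Real.log_exp,
      Real.log_exp] at this
    linarith
  set s : ℝ := Real.sqrt (2 * x) with hs_def
  have hs0 : 0 ≤ s := Real.sqrt_nonneg _
  have hs2 : s ^ 2 = 2 * x := Real.sq_sqrt (by linarith)
  set v : ℝ := 1 + s + x with hv_def
  have hv1 : (1:ℝ) ≤ v := by simp only [hv_def]; linarith
  have hlogv : Real.log v ≤ s := by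
    have h1 : v ≤ Real.exp s := by
      have := Real.quadratic_le_exp_of_nonneg hs0
      simp only [hv_def]; nlinarith
    calc Real.log v ≤ Real.log (Real.exp s) :=
          Real.log_le_log (by linarith) h1
      _ = s := Real.log_exp s
  have hfv : x + 1 ≤ v - Real.log v := by simp only [hv_def]; linarith
  have huv : u ≤ v := by
    by_contra h
    push_neg at h
    have := fmono (Set.mem_Ici.mpr hv1) (Set.mem_Ici.mpr hu1) h
    simp only at this
    linarith
  have : |w| = u := by rw [abs_of_neg (by linarith : w < 0)]
  rw [this]; simp only [hv_def] at huv; linarith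
end

section
/- Let $n \ge 1$, and for each $i \in \{1,\dots,n\}$ and $j \ge 0$ let $g_{i,j} \in \mathbb{R}$, $\varsigma > 0$, $\vartheta \in (0,1]$, $\mu \in (0, 1/2)$, and $\Delta_{i,j} = |g_{i,j}| / w_{i,j}$ where $w_{i,j} \ge \sqrt{\vartheta}\,(\varsigma + \sum_{\ell=0}^j g_{i,\ell}^2)^{\mu}$. Then $\sum_{i=1}^n \sum_{j=0}^k \Delta_{i,j}^2 \le \frac{n}{\vartheta(1-2\mu)} \Big(\varsigma + \sum_{\ell=0}^k \|g_\ell\|^2\Big)^{1-2\mu}$, where $\|g_\ell\|^2 = \sum_{i=1}^n g_{i,\ell}^2$. -/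
/-!
With `T j = ς + ∑_{ℓ < j} g ℓ ^ 2` and `β = 1 - 2μ`, concavity of `t ↦ t ^ β` gives
`g j ^ 2 / T (j + 1) ^ (2μ) ≤ (T (j + 1) ^ β - T j ^ β) / β`, which telescopes along `j`.
The weights `w` cost the factor `1 / ϑ`, and every coordinate's partial sums are bounded by
the partial sums of the full squared norms, which accounts for the factor `n`.
-/

open Finset

-- The concave function `t ↦ t ^ β` lies below its tangent at `x` (weighted AM-GM).
theorem Real.mul_sub_mul_rpow_sub_one_le_rpow_sub_rpow {x y β : ℝ} (hx : 0 < x) (hy : 0 ≤ y)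
    (hβ0 : 0 ≤ β) (hβ1 : β ≤ 1) : β * (x - y) * x ^ (β - 1) ≤ x ^ β - y ^ β := by
  have hamgm : y ^ β * x ^ (1 - β) ≤ β * y + (1 - β) * x :=
    Real.geom_mean_le_arith_mean2_weighted hβ0 (by linarith) hy hx.le (by ring)
  have hcancel : x ^ (1 - β) * x ^ (β - 1) = 1 := by
    rw [← Real.rpow_add hx]; norm_num
  have hpow : x * x ^ (β - 1) = x ^ β := by
    rw [mul_comm, Real.rpow_sub_one hx.ne', div_mul_cancel₀ _ hx.ne']
  have := mul_le_mul_of_nonneg_right hamgm (Real.rpow_nonneg hx.le (β - 1))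
  rw [mul_assoc, hcancel, mul_one] at this
  nlinarith

theorem sum_div_rpow_partialSum_le (a : ℕ → ℝ) (ha : ∀ j, 0 ≤ a j) {ς α : ℝ} (hς : 0 < ς)
    (hα0 : 0 ≤ α) (hα1 : α < 1) (m : ℕ) :
    ∑ j ∈ range m, a j / (ς + ∑ ℓ ∈ range (j + 1), a ℓ) ^ α ≤
      ((ς + ∑ ℓ ∈ range m, a ℓ) ^ (1 - α) - ς ^ (1 - α)) / (1 - α) := by
  set T : ℕ → ℝ := fun j => ς + ∑ ℓ ∈ range j, a ℓ
  have hT : ∀ j, 0 < T j := fun j => add_pos_of_pos_of_nonneg hς (sum_nonneg fun ℓ _ => ha ℓ)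
  have hstep : ∀ j, a j / T (j + 1) ^ α ≤ (T (j + 1) ^ (1 - α) - T j ^ (1 - α)) / (1 - α) := by
    intro j
    have hdiff : T (j + 1) - T j = a j := by simp [T, sum_range_succ]
    have htangent := Real.mul_sub_mul_rpow_sub_one_le_rpow_sub_rpow (hT (j + 1)) (hT j).le
      (by linarith : 0 ≤ 1 - α) (by linarith)
    rw [hdiff, show 1 - α - 1 = -α by ring, Real.rpow_neg (hT _).le] at htangent
    rw [le_div_iff₀ (by linarith), div_eq_mul_inv]
    linarith
  calc ∑ j ∈ range m, a j / T (j + 1) ^ α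
      ≤ ∑ j ∈ range m, (T (j + 1) ^ (1 - α) - T j ^ (1 - α)) / (1 - α) :=
        sum_le_sum fun j _ => hstep j
    _ = (T m ^ (1 - α) - T 0 ^ (1 - α)) / (1 - α) := by
        rw [← sum_div, sum_range_sub (fun j => T j ^ (1 - α))]
    _ = _ := by simp [T]

theorem sq_abs_div_le_of_sqrt_mul_rpow_le {x w s ϑ μ : ℝ} (hs : 0 < s) (hϑ : 0 < ϑ)
    (hw : √ϑ * s ^ μ ≤ w) : (|x| / w) ^ 2 ≤ x ^ 2 / s ^ (2 * μ) / ϑ := by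
  have hsq : ϑ * s ^ (2 * μ) = (√ϑ * s ^ μ) ^ 2 := by
    rw [mul_pow, Real.sq_sqrt hϑ.le, ← Real.rpow_natCast, ← Real.rpow_mul hs.le, mul_comm μ]
    norm_num
  rw [div_pow, sq_abs, div_div, mul_comm, hsq]
  exact div_le_div_of_nonneg_left (sq_nonneg x) (by positivity)
    (pow_le_pow_left₀ (by positivity) hw 2)

theorem sum_sq_abs_div_le_of_sqrt_mul_rpow_le (g w : ℕ → ℝ) {ς ϑ μ : ℝ} (hς : 0 < ς)
    (hϑ : 0 < ϑ) (hμ0 : 0 < μ) (hμ1 : μ < 1 / 2)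
    (hw : ∀ j, √ϑ * (ς + ∑ ℓ ∈ range (j + 1), g ℓ ^ 2) ^ μ ≤ w j) (m : ℕ) :
    ∑ j ∈ range m, (|g j| / w j) ^ 2 ≤
      (ς + ∑ ℓ ∈ range m, g ℓ ^ 2) ^ (1 - 2 * μ) / (ϑ * (1 - 2 * μ)) := by
  have hpartial : ∀ j, 0 < ς + ∑ ℓ ∈ range j, g ℓ ^ 2 := fun j =>
    add_pos_of_pos_of_nonneg hς (sum_nonneg fun ℓ _ => sq_nonneg (g ℓ))
  calc ∑ j ∈ range m, (|g j| / w j) ^ 2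
      ≤ ∑ j ∈ range m, g j ^ 2 / (ς + ∑ ℓ ∈ range (j + 1), g ℓ ^ 2) ^ (2 * μ) / ϑ :=
        sum_le_sum fun j _ => sq_abs_div_le_of_sqrt_mul_rpow_le (hpartial (j + 1)) hϑ (hw j)
    _ ≤ ((ς + ∑ ℓ ∈ range m, g ℓ ^ 2) ^ (1 - 2 * μ) - ς ^ (1 - 2 * μ)) / (1 - 2 * μ) / ϑ := by
        rw [← sum_div]
        gcongr
        exact sum_div_rpow_partialSum_le (fun j => g j ^ 2) (fun j => sq_nonneg (g j)) hς
          (by linarith) (by linarith) m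
    _ ≤ (ς + ∑ ℓ ∈ range m, g ℓ ^ 2) ^ (1 - 2 * μ) / (ϑ * (1 - 2 * μ)) := by
        rw [div_div, mul_comm (1 - 2 * μ)]
        have : 0 < 1 - 2 * μ := by linarith
        gcongr
        linarith [Real.rpow_nonneg hς.le (1 - 2 * μ)]

theorem stmt_13_general (n : ℕ) (g w Δ : Fin n → ℕ → ℝ)
    (ς ϑ μ : ℝ) (hς : 0 < ς) (hϑ0 : 0 < ϑ) (hμ0 : 0 < μ) (hμ1 : μ < 1 / 2)
    (hw : ∀ i j, Real.sqrt ϑ * (ς + ∑ ℓ ∈ Finset.range (j + 1), (g i ℓ) ^ 2) ^ μ ≤ w i j)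
    (hΔ : ∀ i j, Δ i j = |g i j| / w i j) (k : ℕ) :
    ∑ i : Fin n, ∑ j ∈ Finset.range (k + 1), (Δ i j) ^ 2 ≤
      (n : ℝ) / (ϑ * (1 - 2 * μ)) *
        (ς + ∑ ℓ ∈ Finset.range (k + 1), ∑ i : Fin n, (g i ℓ) ^ 2) ^ (1 - 2 * μ) := by
  have h2μ : 0 < 1 - 2 * μ := by linarith
  have hcoord : ∀ i, ∑ j ∈ range (k + 1), Δ i j ^ 2 ≤
      (ς + ∑ ℓ ∈ range (k + 1), ∑ i : Fin n, g i ℓ ^ 2) ^ (1 - 2 * μ) / (ϑ * (1 - 2 * μ)) := by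
    intro i
    simp only [hΔ]
    refine (sum_sq_abs_div_le_of_sqrt_mul_rpow_le (g i) (w i) hς hϑ0 hμ0 hμ1 (hw i) _).trans ?_
    gcongr with ℓ
    exact single_le_sum (f := fun i => g i ℓ ^ 2) (fun _ _ => sq_nonneg _) (mem_univ i)
  calc ∑ i : Fin n, ∑ j ∈ range (k + 1), Δ i j ^ 2
      ≤ ∑ _i : Fin n, (ς + ∑ ℓ ∈ range (k + 1), ∑ i : Fin n, g i ℓ ^ 2) ^ (1 - 2 * μ) /
          (ϑ * (1 - 2 * μ)) := sum_le_sum fun i _ => hcoord i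
    _ = _ := by rw [sum_const, card_univ, Fintype.card_fin, nsmul_eq_mul]; ring

theorem stmt_13 (n : ℕ) (hn : 1 ≤ n) (g w Δ : Fin n → ℕ → ℝ)
    (ς ϑ μ : ℝ) (hς : 0 < ς) (hϑ0 : 0 < ϑ) (hϑ1 : ϑ ≤ 1) (hμ0 : 0 < μ) (hμ1 : μ < 1 / 2)
    (hw : ∀ i j, Real.sqrt ϑ * (ς + ∑ ℓ ∈ Finset.range (j + 1), (g i ℓ) ^ 2) ^ μ ≤ w i j)
    (hΔ : ∀ i j, Δ i j = |g i j| / w i j) (k : ℕ) :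
    ∑ i : Fin n, ∑ j ∈ Finset.range (k + 1), (Δ i j) ^ 2 ≤
      (n : ℝ) / (ϑ * (1 - 2 * μ)) *
        (ς + ∑ ℓ ∈ Finset.range (k + 1), ∑ i : Fin n, (g i ℓ) ^ 2) ^ (1 - 2 * μ) :=
  stmt_13_general n g w Δ ς ϑ μ hς hϑ0 hμ0 hμ1 hw hΔ k
end

section
/- Let $n \ge 1$, $\varsigma > 0$, $\vartheta \in (0,1]$, $\mu \in (1/2, 1)$. For real numbers $g_{i,j}$ ($i \in \{1,\dots,n\}$, $j \ge 0$), let $\Delta_{i,j} = |g_{i,j}|/w_{i,j}$ with $w_{i,j} \ge \sqrt{\vartheta}(\varsigma + \sum_{\ell=0}^j g_{i,\ell}^2)^{\mu}$. Then for all $k$, $\sum_{j=0}^k \Delta_{i,j}^2 \le \frac{\varsigma^{1-2\mu}}{\vartheta(2\mu - 1)}$. -/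
/-!
With `S j = ς + ∑_{ℓ ≤ j} g_ℓ²`, the hypothesis on `w` gives `Δ_j² ≤ ϑ⁻¹ g_j² S_j^(-2μ)`.
Since `g_j² = S_j - S_{j-1}` and `x ↦ x^(1-α)` is convex with derivative `(1-α) x^(-α)`,
each term `(S_j - S_{j-1}) S_j^(-α)` is at most `(S_{j-1}^(1-α) - S_j^(1-α)) / (α - 1)`;
for `α = 2μ > 1` the sum telescopes to at most `ς^(1-α) / (α - 1)`.
-/

open Real Finset

theorem one_add_mul_one_sub_le_rpow_one_sub {α t : ℝ} (hα : 1 ≤ α) (ht : 0 < t) :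
    1 + (α - 1) * (1 - t) ≤ t ^ (1 - α) := by
  have hbern : 1 + α * (t⁻¹ - 1) ≤ (1 + (t⁻¹ - 1)) ^ α :=
    one_add_mul_self_le_rpow_one_add (by linarith [inv_pos.2 ht]) hα
  rw [add_sub_cancel, inv_rpow ht.le, ← rpow_neg ht.le] at hbern
  calc 1 + (α - 1) * (1 - t) = t * (1 + α * (t⁻¹ - 1)) := by field_simp; ring
    _ ≤ t * t ^ (-α) := by gcongr
    _ = t ^ (1 - α) := by rw [sub_eq_add_neg, rpow_add ht, rpow_one]

theorem mul_sub_mul_rpow_neg_le_rpow_one_sub_sub {α b c : ℝ} (hα : 1 ≤ α) (hb : 0 < b)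
    (hc : 0 < c) : (α - 1) * (c - b) * c ^ (-α) ≤ b ^ (1 - α) - c ^ (1 - α) := by
  have key := one_add_mul_one_sub_le_rpow_one_sub hα (div_pos hb hc)
  have hb' : b ^ (1 - α) = (b / c) ^ (1 - α) * c ^ (1 - α) := by
    rw [← mul_rpow (div_pos hb hc).le hc.le, div_mul_cancel₀ _ hc.ne']
  have hc' : c ^ (-α) = c ^ (1 - α) / c := by
    rw [sub_eq_add_neg, rpow_add hc, rpow_one, mul_div_cancel_left₀ _ hc.ne']
  rw [hb', hc']
  calc (α - 1) * (c - b) * (c ^ (1 - α) / c)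
      = c ^ (1 - α) * (1 + (α - 1) * (1 - b / c)) - c ^ (1 - α) := by field_simp; ring
    _ ≤ c ^ (1 - α) * (b / c) ^ (1 - α) - c ^ (1 - α) := by gcongr
    _ = _ := by ring

theorem sum_mul_rpow_neg_partialSum_le {α ς : ℝ} (hα : 1 < α) (hς : 0 < ς) (a : ℕ → ℝ)
    (ha : ∀ j, 0 ≤ a j) (N : ℕ) :
    ∑ j ∈ range N, a j * (ς + ∑ ℓ ∈ range (j + 1), a ℓ) ^ (-α) ≤ ς ^ (1 - α) / (α - 1) := by
  set S : ℕ → ℝ := fun j => ς + ∑ ℓ ∈ range j, a ℓ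
  have hS : ∀ j, 0 < S j := fun j => add_pos_of_pos_of_nonneg hς (sum_nonneg fun ℓ _ => ha ℓ)
  have hstep : ∀ j, a j * S (j + 1) ^ (-α) ≤ (S j ^ (1 - α) - S (j + 1) ^ (1 - α)) / (α - 1) := by
    intro j
    have hinc : S (j + 1) - S j = a j := by simp only [S, sum_range_succ]; ring
    rw [le_div_iff₀ (by linarith), mul_comm, ← mul_assoc, ← hinc]
    exact mul_sub_mul_rpow_neg_le_rpow_one_sub_sub hα.le (hS j) (hS (j + 1))
  calc ∑ j ∈ range N, a j * S (j + 1) ^ (-α)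
      ≤ ∑ j ∈ range N, (S j ^ (1 - α) - S (j + 1) ^ (1 - α)) / (α - 1) := sum_le_sum fun j _ => hstep j
    _ = (ς ^ (1 - α) - S N ^ (1 - α)) / (α - 1) := by
      rw [← sum_div, sum_range_sub' (fun j => S j ^ (1 - α))]; simp [S]
    _ ≤ ς ^ (1 - α) / (α - 1) := by
      gcongr
      exact sub_le_self _ (rpow_pos_of_pos (hS N) _).le

theorem abs_div_sq_le_of_sqrt_mul_rpow_le {ϑ T μ x w : ℝ} (hϑ : 0 < ϑ) (hT : 0 < T)
    (hw : √ϑ * T ^ μ ≤ w) : (|x| / w) ^ 2 ≤ ϑ⁻¹ * (x ^ 2 * T ^ (-(2 * μ))) := by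
  have hsq : (√ϑ * T ^ μ) ^ 2 = ϑ * T ^ (2 * μ) := by
    rw [mul_pow, sq_sqrt hϑ.le, ← rpow_natCast, ← rpow_mul hT.le, mul_comm μ]; norm_num
  calc (|x| / w) ^ 2 = x ^ 2 / w ^ 2 := by rw [div_pow, sq_abs]
    _ ≤ x ^ 2 / (√ϑ * T ^ μ) ^ 2 := by gcongr
    _ = ϑ⁻¹ * (x ^ 2 * T ^ (-(2 * μ))) := by
      rw [hsq, rpow_neg hT.le]; field_simp

theorem stmt_14_general (n : ℕ) (g w Δ : Fin n → ℕ → ℝ)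
    (ς ϑ μ : ℝ) (hς : 0 < ς) (hϑ0 : 0 < ϑ) (hμ0 : 1 / 2 < μ)
    (hw : ∀ i j, Real.sqrt ϑ * (ς + ∑ ℓ ∈ Finset.range (j + 1), (g i ℓ) ^ 2) ^ μ ≤ w i j)
    (hΔ : ∀ i j, Δ i j = |g i j| / w i j) (i : Fin n) (k : ℕ) :
    ∑ j ∈ Finset.range (k + 1), (Δ i j) ^ 2 ≤ ς ^ (1 - 2 * μ) / (ϑ * (2 * μ - 1)) := by
  have hpartial : ∀ j, 0 < ς + ∑ ℓ ∈ range (j + 1), g i ℓ ^ 2 := fun j =>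
    add_pos_of_pos_of_nonneg hς (sum_nonneg fun ℓ _ => sq_nonneg _)
  calc ∑ j ∈ range (k + 1), Δ i j ^ 2
      ≤ ∑ j ∈ range (k + 1),
          ϑ⁻¹ * (g i j ^ 2 * (ς + ∑ ℓ ∈ range (j + 1), g i ℓ ^ 2) ^ (-(2 * μ))) :=
        sum_le_sum fun j _ => hΔ i j ▸ abs_div_sq_le_of_sqrt_mul_rpow_le hϑ0 (hpartial j) (hw i j)
    _ ≤ ϑ⁻¹ * (ς ^ (1 - 2 * μ) / (2 * μ - 1)) := by
      rw [← mul_sum]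
      gcongr
      exact sum_mul_rpow_neg_partialSum_le (by linarith) hς (fun j => g i j ^ 2)
        (fun j => sq_nonneg _) (k + 1)
    _ = ς ^ (1 - 2 * μ) / (ϑ * (2 * μ - 1)) := by
      rw [← mul_div_assoc, inv_mul_eq_div, div_div]

theorem stmt_14 (n : ℕ) (hn : 1 ≤ n) (g w Δ : Fin n → ℕ → ℝ)
    (ς ϑ μ : ℝ) (hς : 0 < ς) (hϑ0 : 0 < ϑ) (hϑ1 : ϑ ≤ 1) (hμ0 : 1 / 2 < μ) (hμ1 : μ < 1)
    (hw : ∀ i j, Real.sqrt ϑ * (ς + ∑ ℓ ∈ Finset.range (j + 1), (g i ℓ) ^ 2) ^ μ ≤ w i j)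
    (hΔ : ∀ i j, Δ i j = |g i j| / w i j) (i : Fin n) (k : ℕ) :
    ∑ j ∈ Finset.range (k + 1), (Δ i j) ^ 2 ≤ ς ^ (1 - 2 * μ) / (ϑ * (2 * μ - 1)) :=
  stmt_14_general n g w Δ ς ϑ μ hς hϑ0 hμ0 hw hΔ i k
end
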